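/- Let A be a Hopf *-algebra over ℂ, n ≥ 1, and let u = (u_{kl})_{1≤k,l≤d} be a d×d matrix with entries in A such that Δ_A(u_{kl}) = Σ_{s=1}^d u_{ks} ⊗ u_{sl}, ε_A(u_{kl}) = δ_{kl}, and u is unitary: Σ_{s=1}^d u_{ks}u_{ls}* = δ_{kl}·1 = Σ_{s=1}^d u_{sk}*u_{sl}. In the free wreath product ℋ = A *_w 𝒜_t(n), endowed with its Hopf *-algebra structure, set v(i,k,j,l) = ν_i(u_{kl})x_{ij} for 1 ≤ i,j ≤ n, 1 ≤ k,l ≤ d. Then: Δ(v(i,k,j,l)) = Σ_{r=1}^n Σ_{s=1}^d v(i,k,r,s) ⊗ v(r,s,j,l); ε(v(i,k,j,l)) = δ_{ij}δ_{kl}; Σ_{r=1}^n Σ_{s=1}^d v(i,k,r,s)·v(j,l,r,s)* = δ_{ij}δ_{kl}·1; and Σ_{r=1}^n Σ_{s=1}^d v(r,s,i,k)*·v(r,s,j,l) = δ_{ij}δ_{kl}·1. (Thus v = (v(i,k,j,l)) is a unitary corepresentation matrix of ℋ.) -/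

import Mathlib

open scoped TensorProduct

noncomputable section

/-- Relations presenting the free wreath product `A *_w 𝒜_t(n)`.
Generators: `Sum.inl (i, a)` is `ν_i(a)`, `Sum.inr (i, j)` is `x_{ij}`. -/
inductive FWRel (A : Type) [Ring A] [Algebra ℂ A] (n : ℕ) :
    FreeAlgebra ℂ ((Fin n × A) ⊕ (Fin n × Fin n)) →
      FreeAlgebra ℂ ((Fin n × A) ⊕ (Fin n × Fin n)) → Prop
  | nu_add (i : Fin n) (a b : A) :
      FWRel A n (FreeAlgebra.ι ℂ (Sum.inl (i, a)) + FreeAlgebra.ι ℂ (Sum.inl (i, b)))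
        (FreeAlgebra.ι ℂ (Sum.inl (i, a + b)))
  | nu_mul (i : Fin n) (a b : A) :
      FWRel A n (FreeAlgebra.ι ℂ (Sum.inl (i, a)) * FreeAlgebra.ι ℂ (Sum.inl (i, b)))
        (FreeAlgebra.ι ℂ (Sum.inl (i, a * b)))
  | nu_smul (i : Fin n) (c : ℂ) (a : A) :
      FWRel A n (c • FreeAlgebra.ι ℂ (Sum.inl (i, a))) (FreeAlgebra.ι ℂ (Sum.inl (i, c • a)))
  | nu_one (i : Fin n) : FWRel A n (FreeAlgebra.ι ℂ (Sum.inl (i, (1 : A)))) 1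
  | x_row (i j k : Fin n) :
      FWRel A n (FreeAlgebra.ι ℂ (Sum.inr (i, j)) * FreeAlgebra.ι ℂ (Sum.inr (i, k)))
        (if j = k then FreeAlgebra.ι ℂ (Sum.inr (i, j)) else 0)
  | x_col (i j k : Fin n) :
      FWRel A n (FreeAlgebra.ι ℂ (Sum.inr (j, i)) * FreeAlgebra.ι ℂ (Sum.inr (k, i)))
        (if j = k then FreeAlgebra.ι ℂ (Sum.inr (j, i)) else 0)
  | x_rowSum (i : Fin n) : FWRel A n (∑ l : Fin n, FreeAlgebra.ι ℂ (Sum.inr (i, l))) 1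
  | x_colSum (i : Fin n) : FWRel A n (∑ l : Fin n, FreeAlgebra.ι ℂ (Sum.inr (l, i))) 1
  | comm (i k : Fin n) (a : A) :
      FWRel A n (FreeAlgebra.ι ℂ (Sum.inl (k, a)) * FreeAlgebra.ι ℂ (Sum.inr (k, i)))
        (FreeAlgebra.ι ℂ (Sum.inr (k, i)) * FreeAlgebra.ι ℂ (Sum.inl (k, a)))

/-- The free wreath product `A *_w 𝒜_t(n)`. -/
abbrev FW (A : Type) [Ring A] [Algebra ℂ A] (n : ℕ) : Type := RingQuot (FWRel A n)

/-- The image of `ν_i(a)` in `A *_w 𝒜_t(n)`. -/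
def wnu (A : Type) [Ring A] [Algebra ℂ A] (n : ℕ) (i : Fin n) (a : A) : FW A n :=
  RingQuot.mkAlgHom ℂ (FWRel A n) (FreeAlgebra.ι ℂ (Sum.inl (i, a)))

/-- The image of `x_{ij}` in `A *_w 𝒜_t(n)`. -/
def wx (A : Type) [Ring A] [Algebra ℂ A] (n : ℕ) (i j : Fin n) : FW A n :=
  RingQuot.mkAlgHom ℂ (FWRel A n) (FreeAlgebra.ι ℂ (Sum.inr (i, j)))

/-- `ν_i` as a `ℂ`-linear map `A →ₗ[ℂ] A *_w 𝒜_t(n)`. -/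
def wnuL (A : Type) [Ring A] [Algebra ℂ A] (n : ℕ) (i : Fin n) : A →ₗ[ℂ] FW A n where
  toFun := wnu A n i
  map_add' a b := by
    have h := RingQuot.mkAlgHom_rel ℂ (FWRel.nu_add (A := A) (n := n) i a b)
    simp only [map_add] at h
    exact h.symm
  map_smul' c a := by
    have h := RingQuot.mkAlgHom_rel ℂ (FWRel.nu_smul (A := A) (n := n) i c a)
    simp only [map_smul] at h
    simpa [wnu] using h.symm



section Helpers

variable (A : Type) [Ring A] [Algebra ℂ A] (n : ℕ)

lemma wnuL_apply (i : Fin n) (a : A) : wnuL A n i a = wnu A n i a := rfl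

lemma wnu_mul (i : Fin n) (a b : A) :
    wnu A n i a * wnu A n i b = wnu A n i (a * b) := by
  have h := RingQuot.mkAlgHom_rel ℂ (FWRel.nu_mul (A := A) (n := n) i a b)
  simpa only [map_mul, wnu] using h

lemma wnu_one (i : Fin n) : wnu A n i 1 = 1 := by
  have h := RingQuot.mkAlgHom_rel ℂ (FWRel.nu_one (A := A) (n := n) i)
  simpa only [map_one, wnu] using h

lemma wnu_zero (i : Fin n) : wnu A n i 0 = 0 := by
  have := map_zero (wnuL A n i)
  simpa only [wnuL_apply] using this

lemma wnu_sum {ι : Type*} (s : Finset ι) (f : ι → A) (i : Fin n) :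
    wnu A n i (∑ t ∈ s, f t) = ∑ t ∈ s, wnu A n i (f t) := by
  have := map_sum (wnuL A n i) f s
  simpa only [wnuL_apply] using this

lemma wx_row (i j k : Fin n) :
    wx A n i j * wx A n i k = if j = k then wx A n i j else 0 := by
  have h := RingQuot.mkAlgHom_rel ℂ (FWRel.x_row (A := A) (n := n) i j k)
  simpa only [map_mul, apply_ite (RingQuot.mkAlgHom ℂ (FWRel A n)), map_zero, wx] using h

lemma wx_col (i j k : Fin n) :
    wx A n j i * wx A n k i = if j = k then wx A n j i else 0 := by
  have h := RingQuot.mkAlgHom_rel ℂ (FWRel.x_col (A := A) (n := n) i j k)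
  simpa only [map_mul, apply_ite (RingQuot.mkAlgHom ℂ (FWRel A n)), map_zero, wx] using h

lemma wx_rowSum (i : Fin n) : ∑ l : Fin n, wx A n i l = 1 := by
  have h := RingQuot.mkAlgHom_rel ℂ (FWRel.x_rowSum (A := A) (n := n) i)
  simpa only [map_sum, map_one, wx] using h

lemma wx_colSum (i : Fin n) : ∑ l : Fin n, wx A n l i = 1 := by
  have h := RingQuot.mkAlgHom_rel ℂ (FWRel.x_colSum (A := A) (n := n) i)
  simpa only [map_sum, map_one, wx] using h

lemma wcomm (i k : Fin n) (a : A) :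
    wnu A n k a * wx A n k i = wx A n k i * wnu A n k a := by
  have h := RingQuot.mkAlgHom_rel ℂ (FWRel.comm (A := A) (n := n) i k a)
  simpa only [map_mul, wnu, wx] using h

end Helpers

/-- Let `A` be a Hopf `*`-algebra over `ℂ`, `n ≥ 1`, and let
`u = (u_{kl})` be a `d × d` unitary corepresentation matrix of `A`.  In
`ℋ = A *_w 𝒜_t(n)`, with its Hopf `*`-algebra structure, the elements
`v(i,k,j,l) = ν_i(u_{kl})x_{ij}` form a unitary corepresentation matrix:
`Δ(v(i,k,j,l)) = Σ_{r,s} v(i,k,r,s) ⊗ v(r,s,j,l)`, `ε(v(i,k,j,l)) = δ_{ij}δ_{kl}`, and the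
two unitarity identities hold. -/
theorem stmt_4 (A : Type) [Ring A] [HopfAlgebra ℂ A] [StarRing A] [StarModule ℂ A]
    -- `Δ_A` and `ε_A` are `*`-homomorphisms (`A` is a Hopf `*`-algebra)
    (hAcomul : ∀ sTA : A ⊗[ℂ] A →+ A ⊗[ℂ] A,
      (∀ a b : A, sTA (a ⊗ₜ[ℂ] b) = star a ⊗ₜ[ℂ] star b) →
      ∀ a : A, Coalgebra.comul (R := ℂ) (star a) = sTA (Coalgebra.comul (R := ℂ) a))
    (hAcounit : ∀ a : A,
      Coalgebra.counit (R := ℂ) (star a) = star (Coalgebra.counit (R := ℂ) a))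
    (n : ℕ) (hn : 1 ≤ n)
    -- the unitary corepresentation matrix `u`
    (d : ℕ) (u : Fin d → Fin d → A)
    (hu_comul : ∀ k l : Fin d,
      Coalgebra.comul (R := ℂ) (u k l) = ∑ s : Fin d, u k s ⊗ₜ[ℂ] u s l)
    (hu_counit : ∀ k l : Fin d,
      Coalgebra.counit (R := ℂ) (u k l) = if k = l then (1 : ℂ) else 0)
    (hu_unit₁ : ∀ k l : Fin d,
      ∑ s : Fin d, u k s * star (u l s) = if k = l then (1 : A) else 0)
    (hu_unit₂ : ∀ k l : Fin d,
      ∑ s : Fin d, star (u s k) * u s l = if k = l then (1 : A) else 0)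
    -- the Hopf `*`-algebra structure of `ℋ = A *_w 𝒜_t(n)`
    (Δ : FW A n →ₐ[ℂ] (FW A n ⊗[ℂ] FW A n))
    (hΔx : ∀ i j : Fin n, Δ (wx A n i j) = ∑ k : Fin n, wx A n i k ⊗ₜ[ℂ] wx A n k j)
    (hΔnu : ∀ (i : Fin n) (a : A),
      Δ (wnu A n i a) =
        ∑ k : Fin n,
          (TensorProduct.map ((LinearMap.mulRight ℂ (wx A n i k)).comp (wnuL A n i))
            (wnuL A n k)) (Coalgebra.comul (R := ℂ) a))
    (ε : FW A n →ₐ[ℂ] ℂ)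
    (hεx : ∀ i j : Fin n, ε (wx A n i j) = if i = j then 1 else 0)
    (hεnu : ∀ (i : Fin n) (a : A), ε (wnu A n i a) = Coalgebra.counit (R := ℂ) a)
    (star' : FW A n →+ FW A n)
    (hst_smul : ∀ (c : ℂ) (h : FW A n), star' (c • h) = (starRingEnd ℂ) c • star' h)
    (hst_inv : ∀ h : FW A n, star' (star' h) = h)
    (hst_mul : ∀ a b : FW A n, star' (a * b) = star' b * star' a)
    (hst_one : star' 1 = 1)
    (hst_x : ∀ i j : Fin n, star' (wx A n i j) = wx A n i j)
    (hst_nu : ∀ (i : Fin n) (a : A), star' (wnu A n i a) = wnu A n i (star a)) :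
    -- `v(i,k,j,l) = ν_i(u_{kl})x_{ij}` is a unitary corepresentation matrix of `ℋ`
    (∀ (i j : Fin n) (k l : Fin d),
      Δ (wnu A n i (u k l) * wx A n i j) =
        ∑ r : Fin n, ∑ s : Fin d,
          (wnu A n i (u k s) * wx A n i r) ⊗ₜ[ℂ] (wnu A n r (u s l) * wx A n r j)) ∧
    (∀ (i j : Fin n) (k l : Fin d),
      ε (wnu A n i (u k l) * wx A n i j) =
        if i = j ∧ k = l then (1 : ℂ) else 0) ∧
    (∀ (i j : Fin n) (k l : Fin d),
      ∑ r : Fin n, ∑ s : Fin d,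
        (wnu A n i (u k s) * wx A n i r) * star' (wnu A n j (u l s) * wx A n j r) =
        if i = j ∧ k = l then (1 : FW A n) else 0) ∧
    (∀ (i j : Fin n) (k l : Fin d),
      ∑ r : Fin n, ∑ s : Fin d,
        star' (wnu A n r (u s k) * wx A n r i) * (wnu A n r (u s l) * wx A n r j) =
        if i = j ∧ k = l then (1 : FW A n) else 0) := by
  refine ⟨fun i j k l => ?_, fun i j k l => ?_, fun i j k l => ?_, fun i j k l => ?_⟩
  · -- comultiplication
    rw [map_mul, hΔnu, hΔx]
    simp only [hu_comul, map_sum, TensorProduct.map_tmul, LinearMap.coe_comp,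
      Function.comp_apply, LinearMap.mulRight_apply, wnuL_apply]
    rw [Finset.sum_mul]
    refine Finset.sum_congr rfl fun r _ => ?_
    rw [Finset.sum_mul]
    refine Finset.sum_congr rfl fun s _ => ?_
    rw [Finset.mul_sum]
    simp only [Algebra.TensorProduct.tmul_mul_tmul, mul_assoc, wx_row, mul_ite, mul_zero,
      TensorProduct.ite_tmul, Finset.sum_ite_eq, Finset.mem_univ, if_true]
  · -- counit
    rw [map_mul, hεnu, hεx, hu_counit]
    by_cases hij : i = j <;> by_cases hkl : k = l <;> simp [hij, hkl]
  · -- unitarity 1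
    have key : ∀ (r : Fin n) (s : Fin d),
        (wnu A n i (u k s) * wx A n i r) * star' (wnu A n j (u l s) * wx A n j r) =
          if i = j then wnu A n i (u k s * star (u l s)) * wx A n i r else 0 := by
      intro r s
      rw [hst_mul, hst_x, hst_nu, mul_assoc, ← mul_assoc (wx A n i r), wx_col]
      by_cases hij : i = j
      · subst hij
        rw [if_pos rfl, if_pos rfl, ← wcomm, ← mul_assoc, wnu_mul]
      · rw [if_neg hij, if_neg hij, zero_mul, mul_zero]
    simp only [key]
    by_cases hij : i = j
    · subst hij
      simp only [eq_self_iff_true, if_true, true_and]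
      have inner : ∀ r : Fin n,
          ∑ s : Fin d, wnu A n i (u k s * star (u l s)) * wx A n i r =
            (if k = l then (1 : FW A n) else 0) * wx A n i r := by
        intro r
        rw [← Finset.sum_mul, ← wnu_sum, hu_unit₁, apply_ite (wnu A n i), wnu_one, wnu_zero]
      simp only [inner]
      by_cases hkl : k = l
      · simp only [if_pos hkl, one_mul, wx_rowSum]
      · simp only [if_neg hkl, zero_mul, Finset.sum_const_zero]
    · simp [hij]
  · -- unitarity 2
    have key : ∀ (r : Fin n) (s : Fin d),
        star' (wnu A n r (u s k) * wx A n r i) * (wnu A n r (u s l) * wx A n r j) =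
          if i = j then wx A n r i * wnu A n r (star (u s k) * u s l) else 0 := by
      intro r s
      rw [hst_mul, hst_x, hst_nu, mul_assoc, ← mul_assoc (wnu A n r (star (u s k))),
        wnu_mul, wcomm, ← mul_assoc, wx_row]
      by_cases hij : i = j
      · rw [if_pos hij, if_pos hij]
      · rw [if_neg hij, if_neg hij, zero_mul]
    simp only [key]
    by_cases hij : i = j
    · subst hij
      simp only [eq_self_iff_true, if_true, true_and]
      have inner : ∀ r : Fin n,
          ∑ s : Fin d, wx A n r i * wnu A n r (star (u s k) * u s l) =
            wx A n r i * (if k = l then (1 : FW A n) else 0) := by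
        intro r
        rw [← Finset.mul_sum, ← wnu_sum, hu_unit₂, apply_ite (wnu A n r), wnu_one, wnu_zero]
      simp only [inner]
      by_cases hkl : k = l
      · simp only [if_pos hkl, mul_one, wx_colSum]
      · simp only [if_neg hkl, mul_zero, Finset.sum_const_zero]
    · simp [hij]
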